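/- Let G be a k × n matrix over ZMod 2 of rank k, generating the binary linear [n,k]-code C (the row space of G) with weight distribution (A_i)_{i=0}^{n}. Let p : Fin n → ℝ with 0 ≤ p i ≤ 1 model n independent bits, and suppose there is a real H > 0 such that for every coordinate i, max(p i, 1 − p i) ≤ 2^{−H} (i.e., every input bit has min-entropy at least H). Then for every output y ∈ (Fin k → ZMod 2), the probability that G applied to the random input equals y satisfies P_p[{x : G.mulVec x = y}] ≤ 2^{−k} · Σ_{i=0}^{n} A_i · (2^{1−H} − 1)^i; equivalently, the total min-entropy of the corrector output Y = G·X is at least −log₂(2^{−k} Σ_{i=0}^{n} A_i (2^{1−H} − 1)^i). -/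
import Mathlib

open Finset

/-- The character of `ZMod 2` in `ℝ`. -/
noncomputable def chi (a : ZMod 2) : ℝ := if a = 1 then -1 else 1

lemma zmod2_cases (a : ZMod 2) : a = 0 ∨ a = 1 := by revert a; decide

lemma chi_zero : chi 0 = 1 := by simp [chi]

lemma chi_add (a b : ZMod 2) : chi (a + b) = chi a * chi b := by
  rcases zmod2_cases a with ha | ha <;> rcases zmod2_cases b with hb | hb <;>
    subst ha <;> subst hb <;> norm_num [chi] <;> decide

lemma chi_abs (a : ZMod 2) : |chi a| = 1 := by
  rcases zmod2_cases a with h | h <;> subst h <;> norm_num [chi]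

lemma chi_sum {ι : Type*} (s : Finset ι) (f : ι → ZMod 2) :
    chi (∑ i ∈ s, f i) = ∏ i ∈ s, chi (f i) := by
  induction s using Finset.cons_induction with
  | empty => simp [chi]
  | cons a s ha ih => rw [Finset.sum_cons, Finset.prod_cons, chi_add, ih]

lemma sum_zmod2 (f : ZMod 2 → ℝ) : ∑ b : ZMod 2, f b = f 0 + f 1 := by
  have h : (Finset.univ : Finset (ZMod 2)) = {0, 1} := by decide
  rw [h, Finset.sum_insert (by decide), Finset.sum_singleton]

lemma sum_chi_dot {k : ℕ} (z : Fin k → ZMod 2) :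
    ∑ a : Fin k → ZMod 2, ∏ i, chi (a i * z i) = if z = 0 then (2:ℝ)^k else 0 := by
  classical
  rw [← Fintype.prod_sum (fun i (b : ZMod 2) => chi (b * z i))]
  have hfac : ∀ i, ∑ b : ZMod 2, chi (b * z i) = if z i = 0 then (2:ℝ) else 0 := by
    intro i
    rcases zmod2_cases (z i) with h | h <;> rw [sum_zmod2] <;> simp [h, chi] <;> norm_num
  by_cases hz : z = 0
  · subst hz
    have h2 : ∀ i : Fin k, (∑ b : ZMod 2, chi (b * (0 : Fin k → ZMod 2) i)) = 2 := by
      intro i; rw [hfac i]; simp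
    rw [if_pos rfl, Finset.prod_congr rfl (fun i _ => h2 i), Finset.prod_const]
    simp
  · rw [if_neg hz]
    obtain ⟨i, hi⟩ : ∃ i, z i ≠ 0 := by
      by_contra hc
      push_neg at hc
      exact hz (funext hc)
    exact Finset.prod_eq_zero (Finset.mem_univ i) (by rw [hfac i, if_neg hi])

lemma indicator_eq {k : ℕ} (z : Fin k → ZMod 2) :
    (if z = 0 then (1:ℝ) else 0)
      = (2:ℝ)^(-(k:ℝ)) * ∑ a : Fin k → ZMod 2, chi (∑ i, a i * z i) := by
  classical
  have h : ∀ a : Fin k → ZMod 2, chi (∑ i, a i * z i) = ∏ i, chi (a i * z i) := fun a =>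
    chi_sum _ _
  rw [Finset.sum_congr rfl (fun a _ => h a), sum_chi_dot]
  have h2 : (2:ℝ)^(-(k:ℝ)) * (2:ℝ)^k = 1 := by
    rw [← Real.rpow_natCast 2 k, ← Real.rpow_add (by norm_num)]
    simp
  by_cases hz : z = 0
  · rw [if_pos hz, if_pos hz, h2]
  · rw [if_neg hz, if_neg hz, mul_zero]

lemma prob_factorization {n : ℕ} (p : Fin n → ℝ) (c : Fin n → ZMod 2) :
    ∑ x : Fin n → ZMod 2, (∏ i, if x i = 1 then p i else 1 - p i) * chi (∑ i, c i * x i)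
      = ∏ i, (if c i = 0 then (1:ℝ) else 1 - 2 * p i) := by
  classical
  have h : ∀ x : Fin n → ZMod 2,
      (∏ i, if x i = 1 then p i else 1 - p i) * chi (∑ i, c i * x i)
        = ∏ i, ((if x i = 1 then p i else 1 - p i) * chi (c i * x i)) := by
    intro x
    rw [chi_sum, ← Finset.prod_mul_distrib]
  rw [Finset.sum_congr rfl (fun x _ => h x),
    ← Fintype.prod_sum (fun i (b : ZMod 2) => (if b = 1 then p i else 1 - p i) * chi (c i * b))]
  refine Finset.prod_congr rfl fun i _ => ?_
  rw [sum_zmod2]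
  rcases zmod2_cases (c i) with h | h <;> simp [h, chi] <;> ring

lemma vecMul_injective {n k : ℕ} (G : Matrix (Fin k) (Fin n) (ZMod 2)) (hG : G.rank = k) :
    Function.Injective (fun a : Fin k → ZMod 2 => Matrix.vecMul a G) := by
  have h1 : Module.finrank (ZMod 2) (LinearMap.range G.vecMulLinear) = k := by
    rw [range_vecMulLinear, ← Matrix.rank_eq_finrank_span_row, hG]
  have h2 := LinearMap.finrank_range_add_finrank_ker G.vecMulLinear
  rw [h1, Module.finrank_fintype_fun_eq_card, Fintype.card_fin] at h2
  have h3 : Module.finrank (ZMod 2) (LinearMap.ker G.vecMulLinear) = 0 := by omega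
  have h4 : LinearMap.ker G.vecMulLinear = ⊥ := Submodule.finrank_eq_zero.mp h3
  have h5 := LinearMap.ker_eq_bot.mp h4
  intro a b hab
  exact h5 (by simpa [Matrix.vecMulLinear_apply] using hab)

lemma abs_prod_le_pow {n : ℕ} (p : Fin n → ℝ) (β : ℝ)
    (hb : ∀ i, |1 - 2 * p i| ≤ β) (c : Fin n → ZMod 2) :
    |∏ i, (if c i = 0 then (1:ℝ) else 1 - 2 * p i)| ≤ β ^ hammingNorm c := by
  classical
  rw [Finset.abs_prod]
  have h1 : β ^ hammingNorm c = ∏ i, (if c i = 0 then (1:ℝ) else β) := by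
    unfold hammingNorm
    rw [Finset.prod_ite, Finset.prod_const_one, Finset.prod_const, one_mul]
  rw [h1]
  refine Finset.prod_le_prod (fun i _ => abs_nonneg _) fun i _ => ?_
  by_cases h : c i = 0
  · simp [h]
  · simp only [if_neg h]
    exact hb i


open Classical in
/-- Probability of a set of bit-vectors under independent, not necessarily identically
distributed bits with coordinate 1-probabilities `p`. -/
noncomputable def probOf {n : ℕ} (p : Fin n → ℝ) (S : Set (Fin n → ZMod 2)) : ℝ :=
  ∑ x : Fin n → ZMod 2,
    if x ∈ S then (∏ i, if x i = 1 then p i else 1 - p i) else 0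

/-- New output min-entropy bound for linear correctors. If every input bit has
min-entropy at least `H` (i.e. `max (p i) (1 - p i) ≤ 2 ^ (-H)`), then every output
probability of the corrector `x ↦ G.mulVec x` is at most
`2 ^ (-k) * ∑ i, A i * (2 ^ (1 - H) - 1) ^ i`, where `(A i)` is the weight distribution of
the code generated by the rows of `G`. -/
theorem corrector_output_prob_le_weight_enumerator_bound {n k : ℕ}
    (G : Matrix (Fin k) (Fin n) (ZMod 2)) (hG : G.rank = k)
    (A : ℕ → ℕ)
    (hA : ∀ i, A i = Nat.card {c : Fin n → ZMod 2 //
      c ∈ Submodule.span (ZMod 2) (Set.range fun j => G j) ∧ hammingNorm c = i})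
    (p : Fin n → ℝ) (hp : ∀ i, 0 ≤ p i ∧ p i ≤ 1)
    (H : ℝ) (hH : 0 < H)
    (hmin : ∀ i, max (p i) (1 - p i) ≤ (2 : ℝ) ^ (-H))
    (y : Fin k → ZMod 2) :
    probOf p {x | G.mulVec x = y} ≤
      (2 : ℝ) ^ (-(k : ℝ)) *
        ∑ i ∈ Finset.range (n + 1), (A i : ℝ) * ((2 : ℝ) ^ ((1 : ℝ) - H) - 1) ^ i := by
  classical
  set β : ℝ := (2:ℝ)^((1:ℝ)-H) - 1 with hβdef
  -- pointwise bias bound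
  have hbias : ∀ i, |1 - 2 * p i| ≤ β := by
    intro i
    have h1 := hmin i
    have h2 : (2:ℝ)^((1:ℝ)-H) = 2 * (2:ℝ)^(-H) := by
      rw [sub_eq_add_neg, Real.rpow_add (by norm_num), Real.rpow_one]
    have hl : p i ≤ (2:ℝ)^(-H) := le_trans (le_max_left _ _) h1
    have hr : 1 - p i ≤ (2:ℝ)^(-H) := le_trans (le_max_right _ _) h1
    rw [abs_le]
    constructor
    · rw [hβdef, h2]; linarith
    · rw [hβdef, h2]; linarith
  -- main Fourier identity
  have hmain : probOf p {x | G.mulVec x = y}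
      = (2:ℝ)^(-(k:ℝ)) * ∑ a : Fin k → ZMod 2, chi (∑ i, a i * y i) *
          ∏ i, (if Matrix.vecMul a G i = 0 then (1:ℝ) else 1 - 2 * p i) := by
    unfold probOf
    have step1 : ∀ (x : Fin n → ZMod 2) (inst : Decidable (x ∈ {x | G.mulVec x = y})),
        (@ite ℝ (x ∈ {x | G.mulVec x = y}) inst (∏ i, if x i = 1 then p i else 1 - p i) 0)
          = (∏ i, if x i = 1 then p i else 1 - p i) *
              ((2:ℝ)^(-(k:ℝ)) * ∑ a : Fin k → ZMod 2, chi (∑ i, a i * (G.mulVec x + y) i)) := by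
      intro x inst
      rw [← indicator_eq]
      have hz : ∀ a b : ZMod 2, a + b = 0 ↔ a = b := by decide
      have hiff : (G.mulVec x + y = 0) ↔ G.mulVec x = y := by
        simp only [funext_iff, Pi.add_apply, Pi.zero_apply]
        exact forall_congr' fun i => hz _ _
      by_cases hx : G.mulVec x = y
      · have h1 : x ∈ {x | G.mulVec x = y} := hx
        rw [if_pos h1, if_pos (hiff.mpr hx), mul_one]
      · have h1 : x ∉ {x | G.mulVec x = y} := hx
        rw [if_neg h1, if_neg (fun h => hx (hiff.mp h)), mul_zero]
    refine (Finset.sum_congr rfl fun x _ => step1 x _).trans ?_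
    have hdot : ∀ (a : Fin k → ZMod 2) (x : Fin n → ZMod 2),
        chi (∑ i, a i * (G.mulVec x + y) i)
          = chi (∑ j, Matrix.vecMul a G j * x j) * chi (∑ i, a i * y i) := by
      intro a x
      have h1 : (∑ i, a i * (G.mulVec x + y) i)
          = (∑ j, Matrix.vecMul a G j * x j) + ∑ i, a i * y i := by
        have h2 : ∑ i, a i * (G.mulVec x + y) i
            = (∑ i, a i * G.mulVec x i) + ∑ i, a i * y i := by
          rw [← Finset.sum_add_distrib]
          exact Finset.sum_congr rfl fun i _ => by rw [Pi.add_apply, mul_add]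
        rw [h2]
        congr 1
        exact Matrix.dotProduct_mulVec a G x
      rw [h1, chi_add]
    have hx1 : ∀ x : Fin n → ZMod 2,
        (∏ i, if x i = 1 then p i else 1 - p i) *
            ((2:ℝ)^(-(k:ℝ)) * ∑ a : Fin k → ZMod 2, chi (∑ i, a i * (G.mulVec x + y) i))
          = ∑ a : Fin k → ZMod 2, (2:ℝ)^(-(k:ℝ)) * (chi (∑ i, a i * y i) *
              ((∏ i, if x i = 1 then p i else 1 - p i) * chi (∑ j, Matrix.vecMul a G j * x j))) := by
      intro x
      rw [Finset.mul_sum, Finset.mul_sum]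
      refine Finset.sum_congr rfl fun a _ => ?_
      rw [hdot a x]
      ring
    rw [Finset.sum_congr rfl fun x _ => hx1 x, Finset.sum_comm, Finset.mul_sum]
    refine Finset.sum_congr rfl fun a _ => ?_
    rw [← Finset.mul_sum, ← Finset.mul_sum, prob_factorization p (Matrix.vecMul a G)]
  rw [hmain]
  have hC : (0:ℝ) ≤ (2:ℝ)^(-(k:ℝ)) := Real.rpow_nonneg (by norm_num) _
  refine mul_le_mul_of_nonneg_left ?_ hC
  -- bound term-by-term, then reindex over codewords
  have hterm : ∀ a : Fin k → ZMod 2,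
      chi (∑ i, a i * y i) * ∏ i, (if Matrix.vecMul a G i = 0 then (1:ℝ) else 1 - 2 * p i)
        ≤ β ^ hammingNorm (Matrix.vecMul a G) := by
    intro a
    calc chi (∑ i, a i * y i) * ∏ i, (if Matrix.vecMul a G i = 0 then (1:ℝ) else 1 - 2 * p i)
        ≤ |chi (∑ i, a i * y i) * ∏ i, (if Matrix.vecMul a G i = 0 then (1:ℝ) else 1 - 2 * p i)| :=
          le_abs_self _
      _ = |∏ i, (if Matrix.vecMul a G i = 0 then (1:ℝ) else 1 - 2 * p i)| := by
          rw [abs_mul, chi_abs, one_mul]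
      _ ≤ β ^ hammingNorm (Matrix.vecMul a G) := abs_prod_le_pow p β hbias _
  refine le_trans (Finset.sum_le_sum fun a _ => hterm a) (le_of_eq ?_)
  -- reindex the sum over the image (the code), then fiberwise by weight
  have hreindex : ∑ a : Fin k → ZMod 2, β ^ hammingNorm (Matrix.vecMul a G)
      = ∑ c ∈ Finset.image (fun a : Fin k → ZMod 2 => Matrix.vecMul a G) Finset.univ,
          β ^ hammingNorm c :=
    (Finset.sum_image (f := fun c => β ^ hammingNorm c)
      (fun a _ b _ h => vecMul_injective G hG h)).symm
  have hmaps : ∀ c ∈ Finset.image (fun a : Fin k → ZMod 2 => Matrix.vecMul a G) Finset.univ,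
      hammingNorm c ∈ Finset.range (n+1) := by
    intro c _
    rw [Finset.mem_range]
    exact Nat.lt_succ_of_le (by simpa using (hammingNorm_le_card_fintype (x := c)))
  have hmem : ∀ c : Fin n → ZMod 2,
      c ∈ Finset.image (fun a : Fin k → ZMod 2 => Matrix.vecMul a G) Finset.univ
        ↔ c ∈ Submodule.span (ZMod 2) (Set.range fun j => G j) := by
    intro c
    rw [Finset.mem_image]
    have hr := range_vecMulLinear G
    constructor
    · rintro ⟨a, -, rfl⟩
      have hmem2 : Matrix.vecMul a G ∈ LinearMap.range G.vecMulLinear :=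
        ⟨a, by simp [Matrix.vecMulLinear_apply]⟩
      rw [hr] at hmem2
      exact hmem2
    · intro hc
      have hmem2 : c ∈ LinearMap.range G.vecMulLinear := by rw [hr]; exact hc
      obtain ⟨a, ha⟩ := hmem2
      exact ⟨a, Finset.mem_univ _, by simpa [Matrix.vecMulLinear_apply] using ha⟩
  rw [hreindex, ← Finset.sum_fiberwise_of_maps_to hmaps (fun c => β ^ hammingNorm c)]
  refine Finset.sum_congr rfl fun i _ => ?_
  have hfib : ∀ c ∈ (Finset.image (fun a : Fin k → ZMod 2 => Matrix.vecMul a G)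
      Finset.univ).filter (fun c => hammingNorm c = i), β ^ hammingNorm c = β ^ i := by
    intro c hc
    rw [(Finset.mem_filter.mp hc).2]
  rw [Finset.sum_congr rfl hfib, Finset.sum_const, nsmul_eq_mul]
  congr 1
  have hcards : ((Finset.image (fun a : Fin k → ZMod 2 => Matrix.vecMul a G)
        Finset.univ).filter (fun c => hammingNorm c = i)).card
      = (Finset.univ.filter (fun c : Fin n → ZMod 2 =>
          c ∈ Submodule.span (ZMod 2) (Set.range fun j => G j) ∧ hammingNorm c = i)).card := by
    congr 1
    ext c
    simp only [Finset.mem_filter, Finset.mem_univ, true_and]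
    rw [hmem c]
  rw [hcards, hA i, Nat.card_eq_fintype_card, Fintype.card_subtype]
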